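/- Any two distinct points of the octahedral lattice G_OCT = { x·(2,0,0) + y·(0,2,0) + z·(1,1,√2) : x,y,z ∈ ℤ } are at Euclidean distance at least 2. -/

import Mathlib

/-- The octahedral lattice. -/
def octLattice : Set (EuclideanSpace ℝ (Fin 3)) :=
  {p | ∃ x y z : ℤ, p = x • !₂[2, 0, 0] +
      y • !₂[0, 2, 0] +
      z • !₂[1, 1, Real.sqrt 2]}

lemma sq_one_le_of_ne {m : ℤ} (hm : m ≠ 0) : 1 ≤ m ^ 2 := by
  have h := Int.one_le_abs hm
  nlinarith [sq_abs m]

lemma oct_key (a b c : ℤ) (h : ¬(a = 0 ∧ b = 0 ∧ c = 0)) :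
    4 ≤ (2 * a + c) ^ 2 + (2 * b + c) ^ 2 + 2 * c ^ 2 := by
  rcases Int.even_or_odd c with ⟨k, hk⟩ | ⟨k, hk⟩
  · subst hk
    by_cases hk0 : k = 0
    · subst hk0
      simp only [add_zero] at *
      rcases not_and_or.mp h with ha | h'
      · have := sq_one_le_of_ne ha
        nlinarith [sq_nonneg (2 * b), sq_nonneg (0:ℤ)]
      · rcases not_and_or.mp h' with hb | hc
        · have := sq_one_le_of_ne hb
          nlinarith [sq_nonneg (2 * a)]
        · simp at hc
    · have := sq_one_le_of_ne hk0
      nlinarith [sq_nonneg (2 * a + (k + k)), sq_nonneg (2 * b + (k + k))]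
  · subst hk
    have h1 : 2 * a + (2 * k + 1) ≠ 0 := by omega
    have h2 : 2 * b + (2 * k + 1) ≠ 0 := by omega
    have h3 : 2 * k + 1 ≠ 0 := by omega
    have := sq_one_le_of_ne h1
    have := sq_one_le_of_ne h2
    have := sq_one_le_of_ne h3
    linarith

theorem octLattice_min_dist :
    ∀ p ∈ octLattice, ∀ q ∈ octLattice, p ≠ q → 2 ≤ dist p q := by
  rintro p ⟨x, y, z, rfl⟩ q ⟨x', y', z', rfl⟩ hne
  have hxyz : ¬(x - x' = 0 ∧ y - y' = 0 ∧ z - z' = 0) := by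
    rintro ⟨hx, hy, hz⟩
    apply hne
    have hx' : x = x' := by omega
    have hy' : y = y' := by omega
    have hz' : z = z' := by omega
    subst hx' hy' hz'
    rfl
  set a := x - x' with ha
  set b := y - y' with hb
  set c := z - z' with hc
  have key := oct_key a b c hxyz
  have keyR : (4 : ℝ) ≤ (2 * (a : ℝ) + c) ^ 2 + (2 * b + c) ^ 2 + 2 * c ^ 2 := by
    exact_mod_cast key
  rw [EuclideanSpace.dist_eq]
  have hsqrt2 : Real.sqrt 2 ^ 2 = 2 := Real.sq_sqrt (by norm_num)
  have hsum : ∑ i, dist ((x • !₂[2, 0, 0] +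
      y • !₂[0, 2, 0] +
      z • !₂[1, 1, Real.sqrt 2] : EuclideanSpace ℝ (Fin 3)) i)
      ((x' • !₂[2, 0, 0] +
      y' • !₂[0, 2, 0] +
      z' • !₂[1, 1, Real.sqrt 2] : EuclideanSpace ℝ (Fin 3)) i) ^ 2 =
      (2 * (a : ℝ) + c) ^ 2 + (2 * b + c) ^ 2 + 2 * c ^ 2 := by
    simp only [ha, hb, hc]
    push_cast
    simp [Fin.sum_univ_three, Real.dist_eq]
    linear_combination ((z : ℝ) - z') ^ 2 * hsqrt2
  rw [hsum]
  rw [Real.le_sqrt' (by norm_num)]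
  nlinarith [keyR]
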